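/- arXiv:1501.01925 — 2 statements merged into one kernel-verified Lean document; each statement's English description precedes it below -/
import Mathlib

section
/- Let θ₁ : f ⇒ g and τ₁ : g ⇒ h be 2-term infinity homotopies between infinity morphisms f, g, h : V → W of 2-term Leibniz infinity algebras. Then the sum θ₁ + τ₁ is a 2-term infinity homotopy from f to h (vertical composition is well defined and associative). -/
/-- A 2-term Leibniz infinity algebra `V = V₀ ⊕ V₁`, given by its components:
`l1 : V₁ → V₀`, the components `l200 : V₀×V₀ → V₀`, `l201 : V₀×V₁ → V₁`,
`l210 : V₁×V₀ → V₁` of the binary bracket, and `l3 : V₀×V₀×V₀ → V₁`, subject to the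
axioms (a)–(e). -/
structure TwoTermLeib (K V0 V1 : Type*) [Field K]
    [AddCommGroup V0] [Module K V0] [AddCommGroup V1] [Module K V1] where
  l1 : V1 →ₗ[K] V0
  l200 : V0 →ₗ[K] V0 →ₗ[K] V0
  l201 : V0 →ₗ[K] V1 →ₗ[K] V1
  l210 : V1 →ₗ[K] V0 →ₗ[K] V1
  l3 : V0 →ₗ[K] V0 →ₗ[K] V0 →ₗ[K] V1
  axA1 : ∀ x h, l1 (l201 x h) = l200 x (l1 h)
  axA2 : ∀ h x, l1 (l210 h x) = l200 (l1 h) x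
  axB : ∀ h k, l201 (l1 h) k = l210 h (l1 k)
  axC : ∀ x y z, l1 (l3 x y z) = l200 x (l200 y z) - l200 y (l200 x z) - l200 (l200 x y) z
  axD1 : ∀ x y h, l3 x y (l1 h) = l201 x (l201 y h) - l201 y (l201 x h) - l201 (l200 x y) h
  axD2 : ∀ x h y, l3 x (l1 h) y = l201 x (l210 h y) - l210 h (l200 x y) - l210 (l201 x h) y
  axD3 : ∀ h x y, l3 (l1 h) x y = l210 h (l200 x y) - l201 x (l210 h y) - l210 (l210 h x) y
  axE : ∀ w x y z,
    l210 (l3 w x y) z + l201 w (l3 x y z) - l201 x (l3 w y z) + l201 y (l3 w x z)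
        - l3 (l200 w x) y z + l3 w (l200 x y) z - l3 x (l200 w y) z
        - l3 w x (l200 y z) + l3 w y (l200 x z) - l3 x y (l200 w z) = 0

/-- An infinity morphism `(f₁, f₂)` between 2-term Leibniz infinity algebras. -/
structure TwoTermMor (K V0 V1 W0 W1 : Type*) [Field K]
    [AddCommGroup V0] [Module K V0] [AddCommGroup V1] [Module K V1]
    [AddCommGroup W0] [Module K W0] [AddCommGroup W1] [Module K W1]
    (LV : TwoTermLeib K V0 V1) (LW : TwoTermLeib K W0 W1) where
  f10 : V0 →ₗ[K] W0
  f11 : V1 →ₗ[K] W1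
  f2 : V0 →ₗ[K] V0 →ₗ[K] W1
  axMa : ∀ h, LW.l1 (f11 h) = f10 (LV.l1 h)
  axMb : ∀ x y, LW.l200 (f10 x) (f10 y) + LW.l1 (f2 x y) = f10 (LV.l200 x y)
  axMc1 : ∀ x h, LW.l201 (f10 x) (f11 h) = f11 (LV.l201 x h) - f2 x (LV.l1 h)
  axMc2 : ∀ h x, LW.l210 (f11 h) (f10 x) = f11 (LV.l210 h x) - f2 (LV.l1 h) x
  axMd : ∀ x y z,
    LW.l3 (f10 x) (f10 y) (f10 z) - LW.l210 (f2 x y) (f10 z)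
        + LW.l201 (f10 x) (f2 y z) - LW.l201 (f10 y) (f2 x z)
      = f11 (LV.l3 x y z) + f2 (LV.l200 x y) z - f2 x (LV.l200 y z) + f2 y (LV.l200 x z)

/-- `θ` is a 2-term infinity homotopy from `F` to `G`. -/
def IsHtpy {K V0 V1 W0 W1 : Type*} [Field K]
    [AddCommGroup V0] [Module K V0] [AddCommGroup V1] [Module K V1]
    [AddCommGroup W0] [Module K W0] [AddCommGroup W1] [Module K W1]
    {LV : TwoTermLeib K V0 V1} {LW : TwoTermLeib K W0 W1}
    (F G : TwoTermMor K V0 V1 W0 W1 LV LW) (θ : V0 →ₗ[K] W1) : Prop :=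
  (∀ x, G.f10 x - F.f10 x = LW.l1 (θ x)) ∧
  (∀ h, G.f11 h - F.f11 h = θ (LV.l1 h)) ∧
  (∀ x y, G.f2 x y - F.f2 x y =
    θ (LV.l200 x y) - LW.l201 (F.f10 x) (θ y) - LW.l210 (θ x) (G.f10 y))

theorem IsHtpy.add {K V0 V1 W0 W1 : Type*} [Field K]
    [AddCommGroup V0] [Module K V0] [AddCommGroup V1] [Module K V1]
    [AddCommGroup W0] [Module K W0] [AddCommGroup W1] [Module K W1]
    {LV : TwoTermLeib K V0 V1} {LW : TwoTermLeib K W0 W1}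
    {F G H : TwoTermMor K V0 V1 W0 W1 LV LW} {θ τ : V0 →ₗ[K] W1}
    (hθ : IsHtpy F G θ) (hτ : IsHtpy G H τ) : IsHtpy F H (θ + τ) := by
  obtain ⟨hθ0, hθ1, hθ2⟩ := hθ
  obtain ⟨hτ0, hτ1, hτ2⟩ := hτ
  refine ⟨fun x => ?_, fun h => ?_, fun x y => ?_⟩
  · rw [LinearMap.add_apply, map_add, ← hθ0, ← hτ0]
    abel
  · rw [LinearMap.add_apply, ← hθ1, ← hτ1]
    abel
  · -- the cross terms of the two homotopies cancel by axiom (b) of `LW`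
    have cross : LW.l201 (G.f10 x - F.f10 x) (τ y) = LW.l210 (θ x) (H.f10 y - G.f10 y) := by
      rw [hθ0, hτ0, LW.axB]
    simp only [map_sub, LinearMap.sub_apply] at cross
    simp only [LinearMap.add_apply, map_add]
    linear_combination (norm := abel) hθ2 x y + hτ2 x y - cross

/-- Vertical composition of 2-term infinity homotopies: if `θ : f ⇒ g` and `τ : g ⇒ h`,
then `θ + τ` is a 2-term infinity homotopy `f ⇒ h`; this composition is associative. -/
theorem vertical_composition {K V0 V1 W0 W1 : Type*} [Field K]
    [AddCommGroup V0] [Module K V0] [AddCommGroup V1] [Module K V1]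
    [AddCommGroup W0] [Module K W0] [AddCommGroup W1] [Module K W1]
    {LV : TwoTermLeib K V0 V1} {LW : TwoTermLeib K W0 W1}
    (F G H : TwoTermMor K V0 V1 W0 W1 LV LW) (θ τ : V0 →ₗ[K] W1)
    (hθ : IsHtpy F G θ) (hτ : IsHtpy G H τ) :
    IsHtpy F H (θ + τ) ∧ ∀ σ : V0 →ₗ[K] W1, θ + τ + σ = θ + (τ + σ) :=
  ⟨hθ.add hτ, add_assoc θ τ⟩
end

section
/- Let θ₁ : f ⇒ g be a 2-term infinity homotopy between infinity morphisms f, g : V → W, and τ₁ : f' ⇒ g' between f', g' : W → X, all between 2-term Leibniz infinity algebras. Then the two candidate horizontal composites g'₁θ₁ + τ₁f₁ and f'₁θ₁ + τ₁g₁ coincide as maps V₀ → X₁. -/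
namespace IsHtpy

variable {K V0 V1 W0 W1 : Type*} [Field K]
  [AddCommGroup V0] [Module K V0] [AddCommGroup V1] [Module K V1]
  [AddCommGroup W0] [Module K W0] [AddCommGroup W1] [Module K W1]
  {LV : TwoTermLeib K V0 V1} {LW : TwoTermLeib K W0 W1}
  {F G : TwoTermMor K V0 V1 W0 W1 LV LW} {θ : V0 →ₗ[K] W1}

theorem f10_sub_f10 (hθ : IsHtpy F G θ) : G.f10 - F.f10 = LW.l1 ∘ₗ θ :=
  LinearMap.ext hθ.1

theorem f11_sub_f11 (hθ : IsHtpy F G θ) : G.f11 - F.f11 = θ ∘ₗ LV.l1 :=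
  LinearMap.ext hθ.2.1

end IsHtpy

/-- Horizontal composition of 2-term infinity homotopies is well defined: for
`θ : f ⇒ g` (with `f, g : V → W`) and `τ : f' ⇒ g'` (with `f', g' : W → X`), the two
candidate horizontal composites `g'₁∘θ + τ∘f₁` and `f'₁∘θ + τ∘g₁` coincide as maps
`V₀ → X₁`. -/
theorem horizontal_composites_agree {K V0 V1 W0 W1 X0 X1 : Type*} [Field K]
    [AddCommGroup V0] [Module K V0] [AddCommGroup V1] [Module K V1]
    [AddCommGroup W0] [Module K W0] [AddCommGroup W1] [Module K W1]
    [AddCommGroup X0] [Module K X0] [AddCommGroup X1] [Module K X1]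
    {LV : TwoTermLeib K V0 V1} {LW : TwoTermLeib K W0 W1} {LX : TwoTermLeib K X0 X1}
    (F G : TwoTermMor K V0 V1 W0 W1 LV LW)
    (F' G' : TwoTermMor K W0 W1 X0 X1 LW LX)
    (θ : V0 →ₗ[K] W1) (τ : W0 →ₗ[K] X1)
    (hθ : IsHtpy F G θ) (hτ : IsHtpy F' G' τ) :
    G'.f11 ∘ₗ θ + τ ∘ₗ F.f10 = F'.f11 ∘ₗ θ + τ ∘ₗ G.f10 := by
  -- both differences equal `τ ∘ l₁ ∘ θ`
  have key : (G'.f11 - F'.f11) ∘ₗ θ = τ ∘ₗ (G.f10 - F.f10) := by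
    rw [hτ.f11_sub_f11, hθ.f10_sub_f10, LinearMap.comp_assoc]
  rw [LinearMap.sub_comp, LinearMap.comp_sub] at key
  exact sub_eq_sub_iff_add_eq_add.mp (sub_eq_sub_iff_sub_eq_sub.mp key)
end
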